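/- There is a constant C > 0 such that the following holds for all n and all 0 < L ≤ U with R = U/L. Suppose the current solution x has discrepancy d(x) ≤ U with respect to processing times p ∈ [L,U]^n, then the processing time of exactly one job is changed to an arbitrary new value in [L, U], and afterwards the processing times remain fixed. Then the expected number of iterations of RLS, and likewise of the (1+1) EA, started from x until a solution of discrepancy at most U (with respect to the new processing times) is obtained, is at most C · min{R, n}. -/

import Mathlib

open scoped BigOperators ENNReal

namespace MakespanDyn

/-- Load of machine `b` (machine `M₁` corresponds to `b = false`, `M₂` to `b = true`). -/
def load {n : ℕ} (p : Fin n → ℝ) (x : Fin n → Bool) (b : Bool) : ℝ :=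
  ∑ i, if x i = b then p i else 0

/-- The makespan of the solution `x` under processing times `p`. -/
def mspan {n : ℕ} (p : Fin n → ℝ) (x : Fin n → Bool) : ℝ :=
  max (load p x false) (load p x true)

/-- The discrepancy of the solution `x` under processing times `p`. -/
def disc {n : ℕ} (p : Fin n → ℝ) (x : Fin n → Bool) : ℝ :=
  |load p x false - load p x true|

/-- Flip bit `i` of `x`. -/
def flip {n : ℕ} (x : Fin n → Bool) (i : Fin n) : Fin n → Bool :=
  Function.update x i (!(x i))

/-- One iteration of RLS with processing times `p`: flip one uniformly random bit
and accept iff the makespan does not increase. -/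
noncomputable def rlsStep {n : ℕ} (hn : 0 < n) (p : Fin n → ℝ) (x : Fin n → Bool) :
    PMF (Fin n → Bool) :=
  haveI : Nonempty (Fin n) := Fin.pos_iff_nonempty.mp hn
  (PMF.uniformOfFintype (Fin n)).map fun i =>
    if mspan p (flip x i) ≤ mspan p x then flip x i else x

/-- The distribution of the mutation mask of the (1+1) EA: every bit is set
independently with probability `1/n`. -/
noncomputable def maskPMF (n : ℕ) (hn : 0 < n) : PMF (Fin n → Bool) :=
  ⟨fun m => ∏ i, (if m i then (n : ℝ≥0∞)⁻¹ else 1 - (n : ℝ≥0∞)⁻¹), by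
    classical
    have hinv : (n : ℝ≥0∞)⁻¹ ≤ 1 := ENNReal.inv_le_one.mpr (by exact_mod_cast hn)
    have hsum :
        ∑ m : Fin n → Bool, ∏ i, (if m i then (n : ℝ≥0∞)⁻¹ else 1 - (n : ℝ≥0∞)⁻¹) = 1 := by
      rw [← Fintype.piFinset_univ, ← Finset.prod_univ_sum
        (fun _ : Fin n => (Finset.univ : Finset Bool))
        (fun _ b => if b then (n : ℝ≥0∞)⁻¹ else 1 - (n : ℝ≥0∞)⁻¹)]
      have key : (n : ℝ≥0∞)⁻¹ + (1 - (n : ℝ≥0∞)⁻¹) = 1 := add_tsub_cancel_of_le hinv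
      simp [key]
    have := hasSum_fintype
      (fun m : Fin n → Bool => ∏ i, (if m i then (n : ℝ≥0∞)⁻¹ else 1 - (n : ℝ≥0∞)⁻¹))
    rwa [hsum] at this⟩

/-- One iteration of the (1+1) EA with processing times `p`: flip every bit
independently with probability `1/n` and accept iff the makespan does not increase. -/
noncomputable def eaStep {n : ℕ} (hn : 0 < n) (p : Fin n → ℝ) (x : Fin n → Bool) :
    PMF (Fin n → Bool) :=
  (maskPMF n hn).map fun m =>
    let y : Fin n → Bool := fun i => xor (m i) (x i)
    if mspan p y ≤ mspan p x then y else x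

/-- A configuration: a solution together with the current processing times. -/
abbrev Cfg (n : ℕ) := (Fin n → Bool) × (Fin n → ℝ)

/-- The run of an algorithm given by `step` with an adversary `adv`, which may
change the processing times (as an arbitrary function of the history) before each
iteration.  `run step adv init t` is the distribution of the history (most recent
configuration first) after `t` iterations. -/
noncomputable def run {n : ℕ} (step : (Fin n → ℝ) → (Fin n → Bool) → PMF (Fin n → Bool))
    (adv : List (Cfg n) → (Fin n → ℝ)) (init : Cfg n) : ℕ → PMF (List (Cfg n))
  | 0 => PMF.pure [init]
  | t + 1 =>
      (run step adv init t).bind fun h =>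
        (step (adv h) h.headI.1).map fun x' => (x', adv h) :: h

/-- The expected number of iterations until a configuration satisfying `good` occurs,
computed as `∑_{t ≥ 0} Pr(T > t)` where `T > t` iff no configuration in the history
after `t` iterations is good. -/
noncomputable def expectedHittingTime {σ : Type*} (runs : ℕ → PMF (List σ))
    (good : σ → Prop) : ℝ≥0∞ :=
  ∑' t, (runs t).toOuterMeasure {h | ∀ c ∈ h, ¬ good c}

/-!
Additive drift on the potential `Φ(d) = a (max (d - U) 0 + 2 U [U < d])` of the discrepancy `d`,
with `a = 3 min(R, n) / U`. While `d > U`, the fuller machine carries `(P + d) / 2 ≥ (n L + U) / 2`,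
and moving any of its jobs (of size `s ≤ U < d`) is accepted and lowers `Φ` by at least `2 a s`:
exactly `2 a s` while `d` stays above `U`, and at least the jump `2 a U` once it does not.
Hence the `n` single-bit flips together lower `Φ` by at least `a (n L + U) ≥ 3 n`. RLS performs
each of them with probability `1/n`, the (1+1) EA with probability `(1/n) (1 - 1/n)^(n-1) ≥ 1/(3n)`,
and no accepted step raises `Φ`; so `Φ` drops by at least one per iteration in expectation.
Changing one job moves `d` by at most `U - L`, so the run starts with `Φ ≤ 3 a U = 9 min(R, n)`.
-/

section Expect

variable {α β : Type*}

noncomputable def expect (μ : PMF α) (f : α → ℝ≥0∞) : ℝ≥0∞ := ∑' a, μ a * f a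

lemma expect_pure (a : α) (f : α → ℝ≥0∞) : expect (PMF.pure a) f = f a := by
  rw [expect, tsum_eq_single a fun b hb => by simp [PMF.pure_apply, hb]]
  simp

lemma expect_bind (μ : PMF α) (g : α → PMF β) (f : β → ℝ≥0∞) :
    expect (μ.bind g) f = expect μ fun a => expect (g a) f := by
  simp only [expect, PMF.bind_apply, ← ENNReal.tsum_mul_right, ← ENNReal.tsum_mul_left]
  rw [ENNReal.tsum_comm]
  simp only [mul_assoc]

lemma expect_map (μ : PMF α) (g : α → β) (f : β → ℝ≥0∞) :
    expect (μ.map g) f = expect μ (f ∘ g) := by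
  simp only [PMF.map, expect_bind, Function.comp_apply, expect_pure]
  rfl

lemma expect_add (μ : PMF α) (f g : α → ℝ≥0∞) :
    expect μ (f + g) = expect μ f + expect μ g := by
  simp only [expect, Pi.add_apply, mul_add, ENNReal.tsum_add]

lemma expect_mono_of_support {μ : PMF α} {f g : α → ℝ≥0∞} (h : ∀ a ∈ μ.support, f a ≤ g a) :
    expect μ f ≤ expect μ g := by
  refine ENNReal.tsum_le_tsum fun a => ?_
  by_cases ha : a ∈ μ.support
  · exact mul_le_mul_right (h a ha) _
  · simp [(PMF.mem_support_iff μ a).not_left.mp ha]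

lemma expect_indicator_one (μ : PMF α) (s : Set α) :
    expect μ (s.indicator 1) = μ.toOuterMeasure s := by
  rw [PMF.toOuterMeasure_apply, expect]
  congr 1 with a
  by_cases ha : a ∈ s <;> simp [ha]

lemma expect_ofReal [Fintype α] (μ : PMF α) {f : α → ℝ} (hf : ∀ a, 0 ≤ f a) :
    expect μ (fun a => ENNReal.ofReal (f a)) = ENNReal.ofReal (∑ a, (μ a).toReal * f a) := by
  rw [expect, tsum_fintype,
    ENNReal.ofReal_sum_of_nonneg fun a _ => mul_nonneg ENNReal.toReal_nonneg (hf a)]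
  congr 1 with a
  rw [ENNReal.ofReal_mul ENNReal.toReal_nonneg, ENNReal.ofReal_toReal (μ.apply_ne_top a)]

lemma sum_toReal_mul_add_le [Fintype α] (μ : PMF α) {f : α → ℝ} {v : ℝ} (hf : ∀ a, f a ≤ v)
    (S : Finset α) {c : ℝ} (hc : ∀ a ∈ S, c ≤ (μ a).toReal) :
    ∑ a, (μ a).toReal * f a + c * ∑ a ∈ S, (v - f a) ≤ v := by
  have hμ : ∑ a, (μ a).toReal = 1 := by
    rw [← ENNReal.toReal_sum fun a _ => μ.apply_ne_top a, ← tsum_fintype (L := .unconditional _),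
      μ.tsum_coe, ENNReal.toReal_one]
  have hdrop : c * ∑ a ∈ S, (v - f a) ≤ ∑ a, (μ a).toReal * (v - f a) :=
    calc c * ∑ a ∈ S, (v - f a) = ∑ a ∈ S, c * (v - f a) := Finset.mul_sum ..
      _ ≤ ∑ a ∈ S, (μ a).toReal * (v - f a) :=
        Finset.sum_le_sum fun a ha => mul_le_mul_of_nonneg_right (hc a ha) (sub_nonneg.2 (hf a))
      _ ≤ ∑ a, (μ a).toReal * (v - f a) :=
        Finset.sum_le_sum_of_subset_of_nonneg (Finset.subset_univ S) fun a _ _ =>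
          mul_nonneg ENNReal.toReal_nonneg (sub_nonneg.2 (hf a))
  have hsplit : ∑ a, (μ a).toReal * (v - f a) = v - ∑ a, (μ a).toReal * f a := by
    simp only [mul_sub, Finset.sum_sub_distrib, ← Finset.sum_mul, hμ, one_mul]
  linarith

lemma expect_map_ofReal_add_one_le [Fintype α] (μ : PMF α) (g : α → β) {f : β → ℝ}
    (hf : ∀ b, 0 ≤ f b) {v : ℝ} (hv : ∀ a, f (g a) ≤ v) (S : Finset α) {c : ℝ}
    (hc : ∀ a ∈ S, c ≤ (μ a).toReal) (hS : 1 ≤ c * ∑ a ∈ S, (v - f (g a))) :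
    expect (μ.map g) (fun b => ENNReal.ofReal (f b)) + 1 ≤ ENNReal.ofReal v := by
  rw [expect_map, Function.comp_def, expect_ofReal μ fun a => hf (g a), ← ENNReal.ofReal_one,
    ← ENNReal.ofReal_add (Finset.sum_nonneg fun a _ => mul_nonneg ENNReal.toReal_nonneg (hf _))
      zero_le_one]
  exact ENNReal.ofReal_le_ofReal (by linarith [sum_toReal_mul_add_le μ hv S hc])

end Expect

section Drift

variable {n : ℕ} (step : (Fin n → ℝ) → (Fin n → Bool) → PMF (Fin n → Bool)) (q : Fin n → ℝ)

lemma expect_run_succ (init : Cfg n) (t : ℕ) (f : List (Cfg n) → ℝ≥0∞) :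
    expect (run step (fun _ => q) init (t + 1)) f =
      expect (run step (fun _ => q) init t)
        fun h => expect (step q h.headI.1) fun z => f ((z, q) :: h) := by
  simp only [run, expect_bind, expect_map]
  rfl

lemma exists_cons_of_mem_support_run {x : Fin n → Bool} {t : ℕ} {h : List (Cfg n)}
    (hh : h ∈ (run step (fun _ => q) (x, q) t).support) : ∃ z tl, h = (z, q) :: tl := by
  cases t with
  | zero => exact ⟨x, [], by simpa [run] using hh⟩
  | succ t =>
    simp only [run, PMF.mem_support_bind_iff, PMF.mem_support_map_iff] at hh
    obtain ⟨tl, -, z, -, rfl⟩ := hh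
    exact ⟨z, tl, rfl⟩

theorem expectedHittingTime_run_le_of_drift (good : Cfg n → Prop) (V : (Fin n → Bool) → ℝ≥0∞)
    (x : Fin n → Bool) (hV : ∀ z, ¬ good (z, q) → expect (step q z) V + 1 ≤ V z) :
    expectedHittingTime (run step (fun _ => q) (x, q)) good ≤ V x := by
  set R := run step (fun _ => q) (x, q)
  set s : Set (List (Cfg n)) := {h | ∀ c ∈ h, ¬ good c}
  set ψ : List (Cfg n) → ℝ≥0∞ := s.indicator fun h => V h.headI.1
  have hdrop : ∀ t, (R t).toOuterMeasure s + expect (R (t + 1)) ψ ≤ expect (R t) ψ := by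
    intro t
    rw [← expect_indicator_one, expect_run_succ, ← expect_add]
    refine expect_mono_of_support fun h hh => ?_
    obtain ⟨z, tl, rfl⟩ := exists_cons_of_mem_support_run step q hh
    by_cases hs : (z, q) :: tl ∈ s
    · have hψ : ∀ z', ψ ((z', q) :: (z, q) :: tl) ≤ V z' := fun z' =>
        Set.indicator_le_self' (fun _ _ => zero_le) _
      calc s.indicator 1 ((z, q) :: tl) + expect (step q z) (fun z' => ψ ((z', q) :: (z, q) :: tl))
        _ ≤ 1 + expect (step q z) V := by
          rw [Set.indicator_of_mem hs]
          exact add_le_add le_rfl (expect_mono_of_support fun z' _ => hψ z')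
        _ ≤ V z := by rw [add_comm]; exact hV z (hs _ List.mem_cons_self)
        _ = ψ ((z, q) :: tl) := (Set.indicator_of_mem hs (fun h => V h.headI.1)).symm
    · have hψ : ∀ z', ψ ((z', q) :: (z, q) :: tl) = 0 := fun z' =>
        Set.indicator_of_notMem
          (fun (h' : ∀ c ∈ _, _) => hs fun c hc => h' c (List.mem_cons_of_mem _ hc)) _
      simp [Set.indicator_of_notMem hs, hψ, expect]
  have htelescope : ∀ T, ∑ t ∈ Finset.range T, (R t).toOuterMeasure s + expect (R T) ψ ≤ V x := by
    intro T
    induction T with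
    | zero =>
      simpa [R, run, expect_pure, ψ] using
        Set.indicator_le_self' (s := s) (f := fun h => V h.headI.1) (fun _ _ => zero_le) [(x, q)]
    | succ T ih =>
      rw [Finset.sum_range_succ, add_assoc]
      exact (add_le_add_right (hdrop T) _).trans ih
  exact ENNReal.tsum_le_of_sum_range_le fun T => le_self_add.trans (htelescope T)

end Drift

section Loads

variable {n : ℕ} (q : Fin n → ℝ) (x : Fin n → Bool)

noncomputable def select (y : Fin n → Bool) : Fin n → Bool :=
  if mspan q y ≤ mspan q x then y else x

lemma load_false_add_load_true : load q x false + load q x true = ∑ i, q i := by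
  rw [load, load, ← Finset.sum_add_distrib]
  exact Finset.sum_congr rfl fun i _ => by cases x i <;> simp

lemma load_false_sub_load_true :
    load q x false - load q x true = ∑ i, if x i then -q i else q i := by
  rw [load, load, ← Finset.sum_sub_distrib]
  exact Finset.sum_congr rfl fun i _ => by cases x i <;> simp

lemma mspan_eq : mspan q x = ((∑ i, q i) + disc q x) / 2 := by
  rw [mspan, disc, ← load_false_add_load_true, max_def]
  split_ifs with h
  · rw [abs_of_nonpos (by linarith)]; ring
  · rw [abs_of_pos (by linarith)]; ring

lemma mspan_le_mspan_iff {y : Fin n → Bool} : mspan q y ≤ mspan q x ↔ disc q y ≤ disc q x := by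
  rw [mspan_eq, mspan_eq]
  constructor <;> intro h <;> linarith

lemma disc_select_le (y : Fin n → Bool) : disc q (select q x y) ≤ disc q x := by
  unfold select
  split_ifs with h
  · exact (mspan_le_mspan_iff q x).1 h
  · exact le_rfl

lemma select_of_disc_le {y : Fin n → Bool} (h : disc q y ≤ disc q x) : select q x y = y :=
  if_pos ((mspan_le_mspan_iff q x).2 h)

lemma exists_load_sub_load_not_eq_disc : ∃ b, load q x b - load q x (!b) = disc q x := by
  rcases le_total (load q x false) (load q x true) with h | h
  · exact ⟨true, by rw [disc, abs_of_nonpos (by linarith)]; simp⟩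
  · exact ⟨false, by rw [disc, abs_of_nonneg (by linarith)]; simp⟩

lemma load_flip (i : Fin n) (b : Bool) :
    load q (flip x i) b = load q x b - if x i = b then q i else -q i := by
  have hsplit := fun y : Fin n → Bool =>
    (Finset.add_sum_erase _ (fun j => if y j = b then q j else 0) (Finset.mem_univ i)).symm
  have hrest : ∀ j ∈ Finset.univ.erase i,
      (if flip x i j = b then q j else 0) = if x j = b then q j else 0 := fun j hj => by
    rw [flip, Function.update_of_ne (Finset.ne_of_mem_erase hj)]
  rw [load, load, hsplit, hsplit x, Finset.sum_congr rfl hrest, flip, Function.update_self]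
  cases x i <;> cases b <;> simp <;> ring

lemma disc_flip_of_load_sub_load_not_eq_disc {b : Bool}
    (hb : load q x b - load q x (!b) = disc q x) {i : Fin n} (hi : x i = b) :
    disc q (flip x i) = |disc q x - 2 * q i| := by
  have hdisc : ∀ y, disc q y = |load q y b - load q y (!b)| := fun y => by
    cases b <;> simp [disc, abs_sub_comm]
  rw [hdisc, load_flip, load_flip, if_pos hi, if_neg (by simp [hi]), ← hb]
  congr 1
  ring

lemma disc_le_disc_add_sum_abs_sub (p p' : Fin n → ℝ) :
    disc p' x ≤ disc p x + ∑ i, |p' i - p i| := by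
  have hsigned : (load p' x false - load p' x true) - (load p x false - load p x true) =
      ∑ i, if x i then -(p' i - p i) else p' i - p i := by
    rw [load_false_sub_load_true, load_false_sub_load_true, ← Finset.sum_sub_distrib]
    exact Finset.sum_congr rfl fun i _ => by split_ifs <;> ring
  have hbound : |∑ i, (if x i then -(p' i - p i) else p' i - p i)| ≤ ∑ i, |p' i - p i| :=
    (Finset.abs_sum_le_sum_abs _ _).trans
      (Finset.sum_le_sum fun i _ => by split_ifs <;> simp only [abs_neg, le_refl])
  have := abs_sub_abs_le_abs_sub (load p' x false - load p' x true)
    (load p x false - load p x true)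
  rw [hsigned] at this
  rw [disc, disc]
  linarith

lemma disc_le_disc_add_abs_sub_of_eq_of_ne {p p' : Fin n → ℝ} {k : Fin n}
    (hk : ∀ i, i ≠ k → p' i = p i) : disc p' x ≤ disc p x + |p' k - p k| := by
  rw [← Finset.sum_eq_single_of_mem (f := fun i => |p' i - p i|) k (Finset.mem_univ k)
    fun i _ hi => by simp [hk i hi]]
  exact disc_le_disc_add_sum_abs_sub x p p'

end Loads

section Potential

noncomputable def recoveryPotential (a U d : ℝ) : ℝ :=
  a * (max (d - U) 0 + if U < d then 2 * U else 0)

variable {a U : ℝ}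

lemma recoveryPotential_nonneg (ha : 0 ≤ a) (hU : 0 ≤ U) (d : ℝ) : 0 ≤ recoveryPotential a U d :=
  mul_nonneg ha (add_nonneg (le_max_right _ _) (by split_ifs <;> linarith))

lemma recoveryPotential_mono (ha : 0 ≤ a) (hU : 0 ≤ U) : Monotone (recoveryPotential a U) := by
  intro d d' h
  refine mul_le_mul_of_nonneg_left (add_le_add (max_le_max (by linarith) le_rfl) ?_) ha
  split_ifs <;> linarith

lemma recoveryPotential_le (ha : 0 ≤ a) (hU : 0 ≤ U) {d : ℝ} (hd : d ≤ 2 * U) :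
    recoveryPotential a U d ≤ 3 * a * U := by
  have hsum : max (d - U) 0 + (if U < d then 2 * U else 0) ≤ 3 * U := by
    have hmax := max_le (by linarith : d - U ≤ U) hU
    split_ifs <;> linarith
  calc recoveryPotential a U d ≤ a * (3 * U) := mul_le_mul_of_nonneg_left hsum ha
    _ = 3 * a * U := by ring

lemma recoveryPotential_abs_sub_add_le (ha : 0 ≤ a) {d s : ℝ} (hd : U < d) (hsU : s ≤ U) :
    recoveryPotential a U |d - 2 * s| + 2 * a * s ≤ recoveryPotential a U d := by
  rw [recoveryPotential, recoveryPotential, if_pos hd, max_eq_left (by linarith : 0 ≤ d - U)]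
  by_cases hstill : U < d - 2 * s
  · rw [abs_of_nonneg (by linarith), if_pos hstill, max_eq_left (by linarith)]
    linarith
  · have hreach : |d - 2 * s| ≤ U := abs_le.2 ⟨by linarith, by linarith⟩
    rw [if_neg hreach.not_gt, max_eq_right (by linarith)]
    nlinarith

end Potential

section Gain

variable {n : ℕ} {a L U : ℝ} {q : Fin n → ℝ} {x : Fin n → Bool}

lemma recoveryPotential_select_flip_add_le (ha : 0 ≤ a) (hU : 0 ≤ U) (hd : U < disc q x)
    {b : Bool} (hb : load q x b - load q x (!b) = disc q x) {i : Fin n} (hqi : q i ∈ Set.Icc 0 U) :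
    recoveryPotential a U (disc q (select q x (flip x i))) + 2 * a * (if x i = b then q i else 0)
      ≤ recoveryPotential a U (disc q x) := by
  split_ifs with hi
  · have hflip := disc_flip_of_load_sub_load_not_eq_disc q x hb hi
    have hacc : select q x (flip x i) = flip x i :=
      select_of_disc_le q x (hflip ▸ abs_le.2 ⟨by linarith [hqi.2], by linarith [hqi.1]⟩)
    rw [hacc, hflip]
    exact recoveryPotential_abs_sub_add_le ha hd hqi.2
  · simpa using recoveryPotential_mono ha hU (disc_select_le q x _)

lemma mul_add_le_sum_sub_recoveryPotential_select_flip (ha : 0 ≤ a) (hL : 0 ≤ L) (hU : 0 ≤ U)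
    (hq : ∀ i, q i ∈ Set.Icc L U) (hd : U < disc q x) :
    a * (n * L + U) ≤ ∑ i, (recoveryPotential a U (disc q x) -
      recoveryPotential a U (disc q (select q x (flip x i)))) := by
  obtain ⟨b, hb⟩ := exists_load_sub_load_not_eq_disc q x
  have hgain : ∀ i, 2 * a * (if x i = b then q i else 0) ≤ recoveryPotential a U (disc q x) -
      recoveryPotential a U (disc q (select q x (flip x i))) := fun i => by
    linarith [recoveryPotential_select_flip_add_le ha hU hd hb ⟨hL.trans (hq i).1, (hq i).2⟩]
  have htotal : load q x b + load q x (!b) = ∑ i, q i := by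
    cases b
    · exact load_false_add_load_true q x
    · rw [add_comm]; exact load_false_add_load_true q x
  have hnL : n * L ≤ ∑ i, q i := by
    simpa using Finset.card_nsmul_le_sum Finset.univ q L fun i _ => (hq i).1
  calc a * (n * L + U) ≤ a * (2 * load q x b) := mul_le_mul_of_nonneg_left (by linarith) ha
    _ = ∑ i, 2 * a * (if x i = b then q i else 0) := by
      rw [load, mul_left_comm, ← mul_assoc, Finset.mul_sum]
    _ ≤ _ := Finset.sum_le_sum fun i _ => hgain i

end Gain

lemma inv_three_le_one_sub_inv_pow (n : ℕ) : (3 : ℝ)⁻¹ ≤ (1 - (n : ℝ)⁻¹) ^ (n - 1) := by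
  rcases Nat.eq_zero_or_pos (n - 1) with hm | hm
  · rw [hm, pow_zero]; norm_num
  obtain ⟨m, rfl⟩ : ∃ m, n = m + 1 := ⟨n - 1, by omega⟩
  -- `(1 - 1/(m+1))^m` is the reciprocal of `(1 + 1/m)^m ≤ e < 3`.
  have hm0 : (m : ℝ) ≠ 0 := Nat.cast_ne_zero.2 (by omega)
  have hrecip : (1 - ((m + 1 : ℕ) : ℝ)⁻¹) ^ m * (1 + (m : ℝ)⁻¹) ^ m = 1 := by
    rw [← mul_pow]
    convert one_pow m
    push_cast
    field_simp
    ring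
  have he : (1 + (m : ℝ)⁻¹) ^ m < 3 :=
    Real.one_add_inv_pow_le_exp.trans_lt (Real.exp_one_lt_d9.trans (by norm_num))
  rw [Nat.add_sub_cancel, eq_inv_of_mul_eq_one_left hrecip]
  exact inv_anti₀ (by positivity) he.le

section Mutation

variable {n : ℕ}

def singleMask (j : Fin n) : Fin n → Bool := fun i => decide (i = j)

lemma singleMask_injective : Function.Injective (singleMask (n := n)) := fun j k h => by
  simpa [singleMask] using congrFun h j

lemma xor_singleMask (x : Fin n → Bool) (j : Fin n) :
    (fun i => xor (singleMask j i) (x i)) = flip x j := by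
  funext i
  rcases eq_or_ne i j with rfl | hij
  · simp [singleMask, flip]
  · simp [singleMask, flip, hij]

lemma maskPMF_singleMask (hn : 0 < n) (j : Fin n) :
    maskPMF n hn (singleMask j) = (n : ℝ≥0∞)⁻¹ * (1 - (n : ℝ≥0∞)⁻¹) ^ (n - 1) := by
  change ∏ i, (if singleMask j i then _ else _) = _
  rw [← Finset.mul_prod_erase Finset.univ _ (Finset.mem_univ j), Finset.prod_congr rfl fun i hi =>
      if_neg (by simpa [singleMask] using Finset.ne_of_mem_erase hi),
    Finset.prod_const, Finset.card_erase_of_mem (Finset.mem_univ j), Finset.card_univ,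
    Fintype.card_fin]
  simp [singleMask]

lemma inv_three_mul_le_maskPMF_singleMask (hn : 0 < n) (j : Fin n) :
    (3 * n : ℝ)⁻¹ ≤ (maskPMF n hn (singleMask j)).toReal := by
  have hinv : (n : ℝ≥0∞)⁻¹ ≤ 1 := ENNReal.inv_le_one.2 (by exact_mod_cast hn)
  rw [maskPMF_singleMask, ENNReal.toReal_mul, ENNReal.toReal_pow,
    ENNReal.toReal_sub_of_le hinv ENNReal.one_ne_top]
  simp only [ENNReal.toReal_inv, ENNReal.toReal_natCast, ENNReal.toReal_one]
  rw [mul_inv, mul_comm]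
  exact mul_le_mul_of_nonneg_left (inv_three_le_one_sub_inv_pow n) (by positivity)

end Mutation

section Steps

variable {n : ℕ} {a L U : ℝ} {q : Fin n → ℝ} {x : Fin n → Bool}

lemma rlsStep_drift (hn : 0 < n) (ha : 0 ≤ a) (hL : 0 ≤ L) (hU : 0 ≤ U)
    (hq : ∀ i, q i ∈ Set.Icc L U) (hgain : n ≤ a * (n * L + U)) (hd : U < disc q x) :
    expect (rlsStep hn q x) (fun y => ENNReal.ofReal (recoveryPotential a U (disc q y))) + 1
      ≤ ENNReal.ofReal (recoveryPotential a U (disc q x)) := by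
  have : Nonempty (Fin n) := Fin.pos_iff_nonempty.mp hn
  refine expect_map_ofReal_add_one_le (PMF.uniformOfFintype (Fin n))
    (fun i => select q x (flip x i)) (fun y => recoveryPotential_nonneg ha hU _)
    (fun i => recoveryPotential_mono ha hU (disc_select_le q x _)) Finset.univ
    (c := (n : ℝ)⁻¹) (fun i _ => by simp) ?_
  have hn' : (0 : ℝ) < n := Nat.cast_pos.2 hn
  rw [le_inv_mul_iff₀ hn', mul_one]
  exact hgain.trans (mul_add_le_sum_sub_recoveryPotential_select_flip ha hL hU hq hd)

lemma eaStep_drift (hn : 0 < n) (ha : 0 ≤ a) (hL : 0 ≤ L) (hU : 0 ≤ U)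
    (hq : ∀ i, q i ∈ Set.Icc L U) (hgain : 3 * n ≤ a * (n * L + U)) (hd : U < disc q x) :
    expect (eaStep hn q x) (fun y => ENNReal.ofReal (recoveryPotential a U (disc q y))) + 1
      ≤ ENNReal.ofReal (recoveryPotential a U (disc q x)) := by
  refine expect_map_ofReal_add_one_le (maskPMF n hn)
    (fun m => select q x fun i => xor (m i) (x i)) (fun y => recoveryPotential_nonneg ha hU _)
    (fun m => recoveryPotential_mono ha hU (disc_select_le q x _))
    (Finset.univ.map ⟨singleMask, singleMask_injective⟩) (c := (3 * n : ℝ)⁻¹) ?_ ?_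
  · simp only [Finset.mem_map, Finset.mem_univ, true_and, Function.Embedding.coeFn_mk]
    rintro _ ⟨j, rfl⟩
    exact inv_three_mul_le_maskPMF_singleMask hn j
  · have hn' : (0 : ℝ) < 3 * n := by positivity
    rw [Finset.sum_map, le_inv_mul_iff₀ hn', mul_one]
    simp only [Function.Embedding.coeFn_mk, xor_singleMask]
    exact hgain.trans (mul_add_le_sum_sub_recoveryPotential_select_flip ha hL hU hq hd)

end Steps

lemma three_mul_le_div_mul_add {n : ℕ} {L U : ℝ} (hL : 0 < L) (hLU : L ≤ U) :
    3 * n ≤ 3 * min (U / L) n / U * (n * L + U) := by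
  have hU : 0 < U := hL.trans_le hLU
  rcases min_choice (U / L) (n : ℝ) with h | h <;> rw [h, div_mul_eq_mul_div, le_div_iff₀ hU]
  · have hUL : U / L * (n * L) = n * U := by field_simp
    nlinarith [mul_nonneg (div_nonneg hU.le hL.le) hU.le]
  · nlinarith [mul_nonneg (mul_nonneg (Nat.cast_nonneg n : (0 : ℝ) ≤ n) (Nat.cast_nonneg n)) hL.le]

/-- If the current solution `x` has discrepancy at most `U` w.r.t.
processing times `p`, and the processing time of exactly one job is changed to an
arbitrary new value in `[L, U]` (yielding `p'`, which afterwards remains fixed), then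
the expected time of RLS, and likewise of the (1+1) EA, started from `x` until a
solution of discrepancy at most `U` w.r.t. `p'` is obtained is `O(min{R, n})` where
`R = U / L`. -/
theorem recover_discrepancy :
    ∃ C : ℝ, 0 < C ∧
      ∀ (n : ℕ) (hn : 0 < n) (L U : ℝ), 0 < L → L ≤ U →
        ∀ p p' : Fin n → ℝ, (∀ i, p i ∈ Set.Icc L U) → (∀ i, p' i ∈ Set.Icc L U) →
          (∃ k, ∀ i, i ≠ k → p' i = p i) →
          ∀ x : Fin n → Bool, disc p x ≤ U →
            expectedHittingTime (run (rlsStep hn) (fun _ => p') (x, p'))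
                (fun c => disc c.2 c.1 ≤ U) ≤
              ENNReal.ofReal (C * min (U / L) n) ∧
            expectedHittingTime (run (eaStep hn) (fun _ => p') (x, p'))
                (fun c => disc c.2 c.1 ≤ U) ≤
              ENNReal.ofReal (C * min (U / L) n) := by
  refine ⟨9, by norm_num, fun n hn L U hL hLU p p' hp hp' ⟨k, hk⟩ x hx => ?_⟩
  have hU : 0 < U := hL.trans_le hLU
  set a := 3 * min (U / L) n / U
  have ha : 0 ≤ a := div_nonneg (mul_nonneg zero_le_three (le_min (by positivity) n.cast_nonneg))
    hU.le
  have hgain : 3 * n ≤ a * (n * L + U) := three_mul_le_div_mul_add hL hLU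
  have hstart : disc p' x ≤ 2 * U := by
    have := disc_le_disc_add_abs_sub_of_eq_of_ne x hk
    have : |p' k - p k| ≤ U - L :=
      abs_sub_le_iff.2 ⟨by linarith [(hp' k).2, (hp k).1], by linarith [(hp k).2, (hp' k).1]⟩
    linarith
  set V := fun y => ENNReal.ofReal (recoveryPotential a U (disc p' y))
  have hVx : V x ≤ ENNReal.ofReal (9 * min (U / L) n) := by
    refine ENNReal.ofReal_le_ofReal ((recoveryPotential_le ha hU.le hstart).trans_eq ?_)
    simp only [a]
    field_simp
    ring
  constructor
  · refine (expectedHittingTime_run_le_of_drift _ _ _ V x fun z hz => ?_).trans hVx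
    exact rlsStep_drift hn ha hL.le hU.le hp' (by linarith) (not_le.1 hz)
  · refine (expectedHittingTime_run_le_of_drift _ _ _ V x fun z hz => ?_).trans hVx
    exact eaStep_drift hn ha hL.le hU.le hp' hgain (not_le.1 hz)

end MakespanDyn
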